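/- arXiv:1112.3066 — 4 statements merged into one kernel-verified Lean document; each statement's English description precedes it below -/
import Mathlib

section
/- Let G = ⟨V, E, ω, λ⟩ be a finite weighted coloured-edge graph with n ≥ 2 vertices and k colours such that for any ordered pair of distinct vertices and any colour there is at most one edge from the first vertex to the second with that colour. Then for any two vertices u and v, the total number of minimal paths from u to v (counting comparable minimal paths of equal weight separately) is at most k·(k+1)^(n−2). -/
/-!
A minimal path from `u` to `v` never returns to `u`, and it is determined by the colour of the
edge by which it leaves each vertex (`exitCol`). Indeed, let two minimal paths with the same exit
colours leave `u` by edges `e` and `f`; these have the same colour, say `wt f ≤ wt e`. The vertex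
`dst f` is visited by both paths, so if `dst f ≠ dst e` then `f` followed by the rest of the path
through `e` from `dst f` on is a path that is no heavier in any colour and strictly lighter in
one. Hence `dst e = dst f`, so `e = f` as at most one edge of each colour joins two vertices, and
we conclude by induction on the tails. The exit colour is one of `k` colours at `u`, irrelevant
at `v`, and one of `k + 1` values (a colour or `none`) elsewhere.
-/

open Classical

/-- A weighted coloured-edge graph: a directed multigraph with vertex set `V`,
edge type `E` (each edge `e` has an initial vertex `src e` and a terminal vertex
`dst e`, and self-loops are excluded), a strictly positive real weight on each edge,
and a surjective colour function onto the colour set `M`. -/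
structure WCEGraph (V : Type) (M : Type) where
  E : Type
  src : E → V
  dst : E → V
  wt : E → ℝ
  col : E → M
  wt_pos : ∀ e, 0 < wt e
  no_loop : ∀ e, src e ≠ dst e
  col_surj : Function.Surjective col

namespace WCEGraph

variable {V M : Type} (G : WCEGraph V M)

/-- `p` is a path from `u` to `v`: a nonempty finite sequence of edges, each edge's
terminal vertex being the next edge's initial vertex, starting at `u` and ending at `v`. -/
def IsPath (u v : V) (p : List G.E) : Prop :=
  p ≠ [] ∧ (∀ e ∈ p.head?, G.src e = u) ∧ (∀ e ∈ p.getLast?, G.dst e = v) ∧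
    p.Chain' (fun a b => G.dst a = G.src b)

/-- The weight `ω_c(p)` of the path `p` in colour `c`: the sum of the weights of
those edges of `p` having colour `c`. -/
noncomputable def colWeight (c : M) (p : List G.E) : ℝ :=
  (p.map (fun e => if G.col e = c then G.wt e else 0)).sum

/-- The preorder on paths: `p ≤ q` iff the weight of `p` in each colour is at most
that of `q`. -/
def pathLE (p q : List G.E) : Prop :=
  ∀ c : M, G.colWeight c p ≤ G.colWeight c q

/-- `p` is a minimal path from `u` to `v`: every path `q` from `u` to `v` with
`q ≤ p` has the same weight as `p` in every colour. -/
def IsMinimal (u v : V) (p : List G.E) : Prop :=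
  G.IsPath u v p ∧
    ∀ q, G.IsPath u v q → G.pathLE q p → ∀ c : M, G.colWeight c q = G.colWeight c p

end WCEGraph

namespace WCEGraph

variable {V M : Type} {G : WCEGraph V M} {u v w x : V} {e f g : G.E} {p q l₁ l₂ : List G.E}

section Weight

@[simp]
lemma colWeight_nil (c : M) : G.colWeight c [] = 0 := rfl

lemma colWeight_cons (c : M) (e : G.E) (p : List G.E) :
    G.colWeight c (e :: p) = (if G.col e = c then G.wt e else 0) + G.colWeight c p := by
  simp [colWeight]

lemma colWeight_append (c : M) (p q : List G.E) :
    G.colWeight c (p ++ q) = G.colWeight c p + G.colWeight c q := by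
  simp [colWeight]

lemma colWeight_nonneg (c : M) (p : List G.E) : 0 ≤ G.colWeight c p :=
  List.sum_nonneg fun _ hx => by
    obtain ⟨e, -, rfl⟩ := List.mem_map.mp hx
    split_ifs
    exacts [(G.wt_pos e).le, le_rfl]

lemma wt_le_colWeight_cons (e : G.E) (p : List G.E) :
    G.wt e ≤ G.colWeight (G.col e) (e :: p) := by
  rw [colWeight_cons, if_pos rfl]
  linarith [colWeight_nonneg (G := G) (G.col e) p]

lemma pathLE_singleton (hcol : G.col f = G.col e) (hwt : G.wt f ≤ G.wt e) :
    G.pathLE [f] [e] := by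
  intro c
  simp only [colWeight_cons, colWeight_nil, hcol]
  split_ifs <;> linarith

end Weight

section Path

lemma isPath_singleton : G.IsPath u v [e] ↔ G.src e = u ∧ G.dst e = v :=
  ⟨fun h => ⟨h.2.1 e rfl, h.2.2.1 e rfl⟩, fun ⟨hu, hv⟩ =>
    ⟨List.cons_ne_nil _ _, by simpa using hu, by simpa using hv, List.isChain_singleton e⟩⟩

lemma IsPath.src_head (h : G.IsPath u v (e :: p)) : G.src e = u := h.2.1 e rfl

lemma IsPath.append (h₁ : G.IsPath u w l₁) (h₂ : G.IsPath w v l₂) :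
    G.IsPath u v (l₁ ++ l₂) := by
  obtain ⟨hne₁, hhead₁, hlast₁, hchain₁⟩ := h₁
  obtain ⟨hne₂, hhead₂, hlast₂, hchain₂⟩ := h₂
  refine ⟨by simp [hne₁], ?_, ?_, hchain₁.append hchain₂ ?_⟩
  · simpa [List.head?_append, List.head?_eq_none_iff.not.mpr hne₁] using hhead₁
  · simpa [List.getLast?_append, List.getLast?_eq_none_iff.not.mpr hne₂] using hlast₂
  · intro a ha b hb
    rw [hlast₁ a ha, hhead₂ b hb]

lemma IsPath.suffix (h : G.IsPath u v (l₁ ++ g :: l₂)) (hl₂ : l₂ ≠ []) :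
    G.IsPath (G.dst g) v l₂ := by
  obtain ⟨-, -, hlast, hchain⟩ := h
  obtain ⟨a, l, rfl⟩ := List.exists_cons_of_ne_nil hl₂
  replace hchain := List.isChain_append_cons_cons.mp hchain
  refine ⟨hl₂, by simpa using hchain.2.1.symm, ?_, hchain.2.2⟩
  simpa [List.getLast?_append] using hlast

lemma IsPath.dst_eq (h : G.IsPath u v (l₁ ++ [g])) : G.dst g = v :=
  h.2.2.1 g (by simp)

lemma IsPath.tail (h : G.IsPath u v (e :: p)) (hp : p ≠ []) : G.IsPath (G.dst e) v p :=
  IsPath.suffix (l₁ := []) h hp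

lemma IsPath.replace_prefix (h : G.IsPath u v (l₁ ++ g :: l₂)) (h' : G.IsPath u (G.dst g) p) :
    G.IsPath u v (p ++ l₂) := by
  rcases eq_or_ne l₂ [] with rfl | hl₂
  · rw [h.dst_eq] at h'
    simpa using h'
  · exact h'.append (h.suffix hl₂)

lemma IsPath.map_src_concat (h : G.IsPath u v p) : p.map G.src ++ [v] = u :: p.map G.dst := by
  induction p generalizing u with
  | nil => exact absurd rfl h.1
  | cons e ρ ih =>
    rcases eq_or_ne ρ [] with rfl | hρ
    · obtain ⟨rfl, rfl⟩ := isPath_singleton.mp h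
      rfl
    · simp [h.src_head, ih (h.tail hρ)]

end Path

section Minimal

/-- The weights being positive, cutting out a nonempty `m` would make the path strictly lighter
in the colour of the first edge of `m`. -/
lemma IsMinimal.eq_nil_of_isPath {l₁' m : List G.E} (hp : G.IsMinimal u v (l₁ ++ m ++ l₂))
    (hle : G.pathLE l₁' l₁) (hq : G.IsPath u v (l₁' ++ l₂)) : m = [] := by
  obtain _ | ⟨a, m⟩ := m
  · rfl
  have hle' : G.pathLE (l₁' ++ l₂) (l₁ ++ a :: m ++ l₂) := fun c => by
    simp only [colWeight_append]
    linarith [hle c, colWeight_nonneg c (a :: m)]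
  have heq := hp.2 _ hq hle' (G.col a)
  simp only [colWeight_append] at heq
  linarith [hle (G.col a), wt_le_colWeight_cons a m, G.wt_pos a]

lemma IsMinimal.tail_eq_nil_of_dst_eq (hp : G.IsMinimal u v (e :: p)) (h : G.dst e = v) :
    p = [] :=
  IsMinimal.eq_nil_of_isPath (l₁ := [e]) (l₂ := []) (by simpa using hp) (fun _ => le_rfl)
    (by simpa using isPath_singleton.mpr ⟨hp.1.src_head, h⟩)

lemma IsMinimal.tail (hp : G.IsMinimal u v (e :: p)) (hne : p ≠ []) :
    G.IsMinimal (G.dst e) v p := by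
  refine ⟨hp.1.tail hne, fun q hq hle c => ?_⟩
  have hq' : G.IsPath u v (e :: q) := (isPath_singleton.mpr ⟨hp.1.src_head, rfl⟩).append hq
  have := hp.2 _ hq' (fun c => by simp only [colWeight_cons]; linarith [hle c]) c
  simp only [colWeight_cons] at this
  linarith

lemma IsMinimal.not_mem_map_dst (huv : u ≠ v) (hp : G.IsMinimal u v p) : u ∉ p.map G.dst := by
  intro hu
  obtain ⟨g, hg, hgu⟩ := List.mem_map.mp hu
  obtain ⟨l₁, l₂, rfl⟩ := List.append_of_mem hg
  have hl₂ : l₂ ≠ [] := by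
    rintro rfl
    exact huv (hgu.symm.trans hp.1.dst_eq)
  have := IsMinimal.eq_nil_of_isPath (l₁ := []) (m := l₁ ++ [g]) (by simpa using hp)
    (fun _ => le_rfl) (by simpa [hgu] using hp.1.suffix hl₂)
  simp at this

lemma IsMinimal.not_mem_map_src_tail (huv : u ≠ v) (hp : G.IsMinimal u v (e :: p)) :
    u ∉ p.map G.src := by
  rcases eq_or_ne p [] with rfl | hne
  · simp
  intro hu
  have := congrArg (u ∈ ·) (hp.1.tail hne).map_src_concat
  simp only [List.mem_append, hu, true_or, List.mem_cons, eq_iff_iff, true_iff] at this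
  exact hp.not_mem_map_dst huv (by simpa using this)

/-- Otherwise `f`, followed by the part of the path after `G.dst f`, would be a shortcut. -/
lemma IsMinimal.dst_not_mem_map_dst_tail (hp : G.IsMinimal u v (e :: p)) (hf : G.src f = u)
    (hcol : G.col f = G.col e) (hwt : G.wt f ≤ G.wt e) : G.dst f ∉ p.map G.dst := by
  intro hmem
  obtain ⟨g, hg, hgf⟩ := List.mem_map.mp hmem
  obtain ⟨α, t, rfl⟩ := List.append_of_mem hg
  have hq : G.IsPath u v (f :: t) :=
    IsPath.replace_prefix (l₁ := e :: α) (p := [f]) hp.1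
      (isPath_singleton.mpr ⟨hf, hgf.symm⟩)
  have := IsMinimal.eq_nil_of_isPath (l₁ := [e]) (m := α ++ [g]) (by simpa using hp)
    (pathLE_singleton hcol hwt) hq
  simp at this

end Minimal

section ExitColour

noncomputable def exitCol (p : List G.E) (x : V) : Option M :=
  (p.find? (G.src · = x)).map G.col

lemma exitCol_cons_src (e : G.E) (p : List G.E) :
    exitCol (e :: p) (G.src e) = some (G.col e) := by
  simp [exitCol]

lemma exitCol_cons_of_ne (h : G.src e ≠ x) : exitCol (e :: p) x = exitCol p x := by
  simp [exitCol, h]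

lemma exitCol_eq_none : exitCol p x = none ↔ x ∉ p.map G.src := by
  simp [exitCol]

lemma IsPath.exitCol_src (hp : G.IsPath u v p) : exitCol p u = some (G.col (p.head hp.1)) := by
  obtain _ | ⟨e, p⟩ := p
  · exact absurd rfl hp.1
  · exact hp.src_head ▸ exitCol_cons_src e p

lemma IsPath.mem_map_dst_iff (hp : G.IsPath u v p) (hq : G.IsPath u v q)
    (hkey : ∀ x ≠ v, exitCol p x = exitCol q x) (hx : x ≠ u) :
    x ∈ p.map G.dst ↔ x ∈ q.map G.dst := by
  have visits : ∀ {r}, G.IsPath u v r →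
      (x ∈ r.map G.dst ↔ x = v ∨ exitCol r x ≠ none) := by
    intro r hr
    have := congrArg (x ∈ ·) hr.map_src_concat
    simp only [List.mem_append, List.mem_cons, List.not_mem_nil, or_false, hx, false_or,
      eq_iff_iff] at this
    rw [← this, ne_eq, exitCol_eq_none, not_not, or_comm]
  rw [visits hp, visits hq]
  by_cases hxv : x = v
  · simp [hxv]
  · rw [hkey x hxv]

end ExitColour

section Uniqueness

variable {ρ σ : List G.E}

lemma IsMinimal.head_eq_of_exitCol_eq
    (hone : ∀ e f : G.E, G.src e = G.src f → G.dst e = G.dst f → G.col e = G.col f → e = f)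
    (huv : u ≠ v) (hp : G.IsMinimal u v (e :: ρ)) (hq : G.IsMinimal u v (f :: σ))
    (hkey : ∀ x ≠ v, exitCol (e :: ρ) x = exitCol (f :: σ) x) :
    e = f := by
  have hue := hp.1.src_head
  have huf := hq.1.src_head
  have hcol : G.col e = G.col f := by
    have h := hkey u huv
    rw [← hue, exitCol_cons_src, hue, ← huf, exitCol_cons_src] at h
    exact Option.some_injective _ h
  refine hone e f (hue.trans huf.symm) ?_ hcol
  by_contra hd
  have hvisit : ∀ x ≠ u, x ∈ G.dst e :: ρ.map G.dst ↔ x ∈ G.dst f :: σ.map G.dst :=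
    fun x hx => hp.1.mem_map_dst_iff hq.1 hkey hx
  rcases le_total (G.wt f) (G.wt e) with hw | hw
  · refine hp.dst_not_mem_map_dst_tail huf hcol.symm hw ?_
    have := (hvisit _ (huf ▸ (G.no_loop f).symm)).mpr (List.mem_cons_self ..)
    simpa [Ne.symm hd] using this
  · refine hq.dst_not_mem_map_dst_tail hue hcol hw ?_
    have := (hvisit _ (hue ▸ (G.no_loop e).symm)).mp (List.mem_cons_self ..)
    simpa [hd] using this

lemma IsMinimal.eq_of_exitCol_eq
    (hone : ∀ e f : G.E, G.src e = G.src f → G.dst e = G.dst f → G.col e = G.col f → e = f)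
    (huv : u ≠ v) (hp : G.IsMinimal u v p) (hq : G.IsMinimal u v q)
    (hkey : ∀ x ≠ v, exitCol p x = exitCol q x) : p = q := by
  induction p generalizing u q with
  | nil => exact absurd rfl hp.1.1
  | cons e ρ ih =>
    obtain _ | ⟨f, σ⟩ := q
    · exact absurd rfl hq.1.1
    obtain rfl := hp.head_eq_of_exitCol_eq hone huv hq hkey
    rcases eq_or_ne (G.dst e) v with hv | hv
    · rw [hp.tail_eq_nil_of_dst_eq hv, hq.tail_eq_nil_of_dst_eq hv]
    have hρ : ρ ≠ [] := by
      rintro rfl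
      exact hv (isPath_singleton.mp hp.1).2
    have hσ : σ ≠ [] := by
      rintro rfl
      exact hv (isPath_singleton.mp hq.1).2
    refine congrArg _ (ih hv (hp.tail hρ) (hq.tail hσ) fun x hx => ?_)
    rcases eq_or_ne x u with rfl | hxu
    · rw [exitCol_eq_none.mpr (hp.not_mem_map_src_tail huv),
        exitCol_eq_none.mpr (hq.not_mem_map_src_tail huv)]
    · have hex : G.src e ≠ x := hp.1.src_head ▸ hxu.symm
      simpa only [exitCol_cons_of_ne hex] using hkey x hx

end Uniqueness

end WCEGraph

open WCEGraph

theorem total_minimal_paths_card_le_general {V M : Type} [Fintype V] [Fintype M]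
    (G : WCEGraph V M) [Fintype G.E]
    (n k : ℕ) (hn : Fintype.card V = n) (hk : Fintype.card M = k)
    (hone : ∀ e f : G.E, G.src e = G.src f → G.dst e = G.dst f → G.col e = G.col f → e = f)
    (u v : V) (huv : u ≠ v) :
    {p : List G.E | G.IsMinimal u v p}.Finite ∧
      {p : List G.E | G.IsMinimal u v p}.ncard ≤ k * (k + 1) ^ (n - 2) := by
  set S := {p : List G.E | G.IsMinimal u v p}
  let D := ↥(({u, v} : Finset V)ᶜ)
  let F : S → M × (D → Option M) := fun p => (G.col (p.1.head p.2.1.1), fun x => exitCol p.1 x)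
  have hF : F.Injective := by
    rintro ⟨p, hp⟩ ⟨q, hq⟩ hpq
    obtain ⟨hhead, hkey⟩ := Prod.ext_iff.mp hpq
    refine Subtype.ext (hp.eq_of_exitCol_eq hone huv hq fun x hxv => ?_)
    rcases eq_or_ne x u with rfl | hxu
    · rw [hp.1.exitCol_src, hq.1.exitCol_src]
      exact congrArg some hhead
    · exact congrFun hkey ⟨x, by simp [hxu, hxv]⟩
  have hcard : Fintype.card (M × (D → Option M)) = k * (k + 1) ^ (n - 2) := by
    rw [Fintype.card_prod, Fintype.card_fun, Fintype.card_option, Fintype.card_coe,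
      Finset.card_compl, Finset.card_pair huv, hn, hk]
  have : Finite S := Finite.of_injective F hF
  refine ⟨Set.toFinite S, ?_⟩
  rw [← Nat.card_coe_set_eq, ← hcard, ← Nat.card_eq_fintype_card]
  exact Nat.card_le_card_of_injective F hF

/-- In a finite weighted coloured-edge graph with `n ≥ 2` vertices and
`k` colours, having at most one edge of each colour between any ordered pair of distinct
vertices, the total number of minimal paths from one vertex `u` to another vertex `v`
is at most `k * (k + 1) ^ (n - 2)`. -/
theorem total_minimal_paths_card_le {V M : Type} [Fintype V] [Fintype M]
    (G : WCEGraph V M) [Fintype G.E]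
    (n k : ℕ) (hn : Fintype.card V = n) (hk : Fintype.card M = k) (h2 : 2 ≤ n)
    (hone : ∀ e f : G.E, G.src e = G.src f → G.dst e = G.dst f → G.col e = G.col f → e = f)
    (u v : V) (huv : u ≠ v) :
    {p : List G.E | G.IsMinimal u v p}.Finite ∧
      {p : List G.E | G.IsMinimal u v p}.ncard ≤ k * (k + 1) ^ (n - 2) :=
  total_minimal_paths_card_le_general G n k hn hk hone u v huv
end

section
/- Let n ≥ 2 and let G be the weighted coloured-edge chain with vertices v₁, …, v_n and k colours in which, for each i with 1 ≤ i ≤ n−1 and each colour c, there is exactly one edge from v_i to v_{i+1} of colour c with weight 2^(i−1), and there are no other edges. Then the k^(n−1) paths from v₁ to v_n are pairwise incomparable, and hence all k^(n−1) of them are minimal; in particular the bound k^(n−1) on a set of pairwise incomparable minimal paths is attained. -/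
open Classical

/-- The chain with vertices `v₁, …, v_n` (represented by `Fin n`, so `v_i` is `i - 1`)
and `k` colours, in which for each `1 ≤ i ≤ n - 1` and each colour `c` there is exactly
one edge from `v_i` to `v_{i+1}` of colour `c`, with weight `2 ^ (i - 1)`. -/
noncomputable def chainGraph (n k : ℕ) (hn : 2 ≤ n) : WCEGraph (Fin n) (Fin k) where
  E := Fin (n - 1) × Fin k
  src e := e.1.castLE (Nat.sub_le n 1)
  dst e := ⟨e.1.1 + 1, by omega⟩
  wt e := 2 ^ e.1.1
  col e := e.2
  wt_pos e := by positivity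
  no_loop e := by
    intro h
    have h' := congrArg Fin.val h
    simp only [Fin.coe_castLE] at h'
    omega
  col_surj c := ⟨(⟨0, by omega⟩, c), rfl⟩

/-!
A path from `v₁` to `v_n` takes exactly one edge at each step, so it is determined by the
colour `f j` of its `j`-th edge, and its weight in colour `c` is the binary number
`∑_{f j = c} 2 ^ j`. Every path has the same total weight `∑_j 2 ^ j`, so `p ≤ q` forces
equality in every colour, and uniqueness of binary expansions then forces `p = q`.
-/

namespace WCEGraph

variable {V M : Type} {G : WCEGraph V M}

theorem isPath_iff_getElem {u v : V} {p : List G.E} :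
    G.IsPath u v p ↔ ∃ h : 0 < p.length, G.src p[0] = u ∧ G.dst p[p.length - 1] = v ∧
      ∀ i (hi : i + 1 < p.length), G.dst p[i] = G.src p[i + 1] := by
  cases p with
  | nil => simp [IsPath]
  | cons e p =>
    simp [IsPath, List.Chain', List.isChain_iff_getElem, List.getLast?_eq_some_getLast,
      List.getLast_eq_getElem]

theorem sum_colWeight [Fintype M] (p : List G.E) :
    ∑ c, G.colWeight c p = (p.map G.wt).sum := by
  induction p with
  | nil => simp [colWeight]
  | cons e p ih => simp_all [colWeight, Finset.sum_add_distrib]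

theorem colWeight_eq_of_pathLE [Fintype M] {p q : List G.E} (hpq : G.pathLE p q)
    (hwt : (p.map G.wt).sum = (q.map G.wt).sum) (c : M) :
    G.colWeight c p = G.colWeight c q := by
  rw [← sum_colWeight, ← sum_colWeight] at hwt
  exact (Finset.sum_eq_sum_iff_of_le fun c _ => hpq c).mp hwt c (Finset.mem_univ c)

end WCEGraph

theorem Fin.sum_two_pow_injective {m : ℕ} :
    Function.Injective fun s : Finset (Fin m) => ∑ j ∈ s, (2 : ℝ) ^ (j : ℕ) := by
  intro s t hst
  beta_reduce at hst
  have hnat :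
      ∑ j ∈ s.map Fin.valEmbedding, 2 ^ j = ∑ j ∈ t.map Fin.valEmbedding, 2 ^ j := by
    simp only [Finset.sum_map, Fin.valEmbedding_apply]
    exact_mod_cast hst
  exact Finset.map_injective _ (Finset.geomSum_injective le_rfl hnat)

section chainGraph

variable {n k : ℕ} (hn : 2 ≤ n)

def chainEdge (j : Fin (n - 1)) (c : Fin k) : (chainGraph n k hn).E := (j, c)

section chainEdge

variable (j : Fin (n - 1)) (c : Fin k)

@[simp]
theorem val_src_chainEdge : ((chainGraph n k hn).src (chainEdge hn j c) : ℕ) = j := rfl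

@[simp]
theorem val_dst_chainEdge : ((chainGraph n k hn).dst (chainEdge hn j c) : ℕ) = j + 1 := rfl

@[simp]
theorem wt_chainEdge : (chainGraph n k hn).wt (chainEdge hn j c) = 2 ^ (j : ℕ) := rfl

@[simp]
theorem col_chainEdge : (chainGraph n k hn).col (chainEdge hn j c) = c := rfl

end chainEdge

def chainPath (f : Fin (n - 1) → Fin k) : List (chainGraph n k hn).E :=
  List.ofFn fun j => chainEdge hn j (f j)

@[simp]
theorem length_chainPath (f : Fin (n - 1) → Fin k) : (chainPath hn f).length = n - 1 :=
  List.length_ofFn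

@[simp]
theorem getElem_chainPath (f : Fin (n - 1) → Fin k) (i : ℕ) (hi : i < (chainPath hn f).length) :
    (chainPath hn f)[i] = chainEdge hn ⟨i, by simpa using hi⟩ (f ⟨i, by simpa using hi⟩) :=
  List.getElem_ofFn ..

theorem chainPath_isPath (f : Fin (n - 1) → Fin k) :
    (chainGraph n k hn).IsPath ⟨0, Nat.zero_lt_of_lt hn⟩ ⟨n - 1, Nat.sub_one_lt_of_lt hn⟩
      (chainPath hn f) := by
  rw [WCEGraph.isPath_iff_getElem]
  refine ⟨by simp; omega, ?_, ?_, ?_⟩ <;> simp [Fin.ext_iff]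
  omega

theorem chainGraph_val_fst_getElem_of_isPath {v : Fin n} {p : List (chainGraph n k hn).E}
    (hp : (chainGraph n k hn).IsPath ⟨0, Nat.zero_lt_of_lt hn⟩ v p) (i : ℕ)
    (hi : i < p.length) :
    (p[i].1 : ℕ) = i := by
  obtain ⟨hpos, hsrc, -, hstep⟩ := WCEGraph.isPath_iff_getElem.mp hp
  induction i with
  | zero => exact congrArg Fin.val hsrc
  | succ i ih =>
    have hstep_val : (p[i].1 : ℕ) + 1 = p[i + 1].1 := congrArg Fin.val (hstep i hi)
    rw [ih (by omega)] at hstep_val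
    exact hstep_val.symm

theorem chainGraph_length_of_isPath {p : List (chainGraph n k hn).E}
    (hp : (chainGraph n k hn).IsPath ⟨0, Nat.zero_lt_of_lt hn⟩
      ⟨n - 1, Nat.sub_one_lt_of_lt hn⟩ p) :
    p.length = n - 1 := by
  obtain ⟨hpos, -, hdst, -⟩ := WCEGraph.isPath_iff_getElem.mp hp
  have hlast : (p[p.length - 1].1 : ℕ) + 1 = n - 1 := congrArg Fin.val hdst
  rw [chainGraph_val_fst_getElem_of_isPath hn hp] at hlast
  omega

theorem setOf_isPath_chainGraph :
    {p | (chainGraph n k hn).IsPath ⟨0, Nat.zero_lt_of_lt hn⟩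
      ⟨n - 1, Nat.sub_one_lt_of_lt hn⟩ p} =
      Set.range (chainPath hn) := by
  ext p
  refine ⟨fun hp => ?_, by rintro ⟨f, rfl⟩; exact chainPath_isPath hn f⟩
  have hlen := chainGraph_length_of_isPath hn hp
  refine ⟨fun j => p[j.1].2, List.ext_getElem (by simp [hlen]) fun i hi _ => ?_⟩
  simp only [getElem_chainPath]
  exact Prod.ext (Fin.ext (chainGraph_val_fst_getElem_of_isPath hn hp i (by omega)).symm) rfl

theorem colWeight_chainPath (c : Fin k) (f : Fin (n - 1) → Fin k) :
    (chainGraph n k hn).colWeight c (chainPath hn f) =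
      ∑ j with f j = c, (2 : ℝ) ^ (j : ℕ) := by
  simp only [WCEGraph.colWeight, chainPath, List.map_ofFn, List.sum_ofFn, Finset.sum_filter,
    Function.comp_def, col_chainEdge, wt_chainEdge]
  exact Finset.sum_congr rfl fun j _ => by split_ifs with h <;> simp [h]

theorem sum_wt_chainPath (f : Fin (n - 1) → Fin k) :
    ((chainPath hn f).map (chainGraph n k hn).wt).sum =
      ∑ j : Fin (n - 1), (2 : ℝ) ^ (j : ℕ) := by
  simp [chainPath, List.sum_ofFn]

theorem eq_of_colWeight_chainPath_eq {f g : Fin (n - 1) → Fin k}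
    (h : ∀ c, (chainGraph n k hn).colWeight c (chainPath hn f) =
      (chainGraph n k hn).colWeight c (chainPath hn g)) : f = g := by
  have hfiber (c : Fin k) : Finset.univ.filter (f · = c) = Finset.univ.filter (g · = c) := by
    apply Fin.sum_two_pow_injective
    simpa only [colWeight_chainPath] using h c
  funext j
  simpa using (Finset.ext_iff.mp (hfiber (g j)) j).mpr (by simp)

theorem eq_of_pathLE_chainPath {f g : Fin (n - 1) → Fin k}
    (h : (chainGraph n k hn).pathLE (chainPath hn f) (chainPath hn g)) : f = g :=
  eq_of_colWeight_chainPath_eq hn <|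
    WCEGraph.colWeight_eq_of_pathLE h (by rw [sum_wt_chainPath, sum_wt_chainPath])

end chainGraph

/-- In the chain with `n ≥ 2` vertices and `k` colours whose three
parallel edges from `v_i` to `v_{i+1}` (one per colour) all have weight `2 ^ (i - 1)`,
the paths from `v₁` to `v_n` are pairwise incomparable, hence all minimal, and there
are exactly `k ^ (n - 1)` of them: the bound `k ^ (n - 1)` is attained. -/
theorem chainGraph_all_paths_minimal (n k : ℕ) (hn : 2 ≤ n) :
    (∀ p ∈ {p : List (chainGraph n k hn).E |
        (chainGraph n k hn).IsPath ⟨0, by omega⟩ ⟨n - 1, by omega⟩ p},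
      ∀ q ∈ {p : List (chainGraph n k hn).E |
        (chainGraph n k hn).IsPath ⟨0, by omega⟩ ⟨n - 1, by omega⟩ p},
      p ≠ q → ¬ (chainGraph n k hn).pathLE p q ∧ ¬ (chainGraph n k hn).pathLE q p) ∧
    (∀ p ∈ {p : List (chainGraph n k hn).E |
        (chainGraph n k hn).IsPath ⟨0, by omega⟩ ⟨n - 1, by omega⟩ p},
      (chainGraph n k hn).IsMinimal ⟨0, by omega⟩ ⟨n - 1, by omega⟩ p) ∧
    {p : List (chainGraph n k hn).E |
        (chainGraph n k hn).IsPath ⟨0, by omega⟩ ⟨n - 1, by omega⟩ p}.Finite ∧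
    {p : List (chainGraph n k hn).E |
        (chainGraph n k hn).IsPath ⟨0, by omega⟩ ⟨n - 1, by omega⟩ p}.ncard
      = k ^ (n - 1) := by
  have hinj : Function.Injective (chainPath hn (k := k)) := fun f g hfg =>
    eq_of_colWeight_chainPath_eq hn fun c => by rw [hfg]
  rw [setOf_isPath_chainGraph hn]
  refine ⟨?_, ?_, Set.finite_range _, ?_⟩
  · rintro _ ⟨f, rfl⟩ _ ⟨g, rfl⟩ hfg
    exact ⟨fun h => hfg (congrArg _ (eq_of_pathLE_chainPath hn h)),
      fun h => hfg (congrArg _ (eq_of_pathLE_chainPath hn h).symm)⟩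
  · rintro _ ⟨f, rfl⟩
    refine ⟨chainPath_isPath hn f, fun q hq hle => ?_⟩
    obtain ⟨g, rfl⟩ : q ∈ Set.range (chainPath hn) := setOf_isPath_chainGraph hn ▸ hq
    exact fun c => by rw [eq_of_pathLE_chainPath hn hle]
  · rw [Set.ncard_range_of_injective hinj, Nat.card_fun]
    simp
end

section
/- Let G be a finite weighted bicoloured-edge graph with colours {red, green}, let u, v be vertices of G such that there exists a path from u to v using only green edges, let e be a red edge of G, and suppose the weight ω(e) is a random variable with probability density function f_e : (0,∞) → [0, φ_e] bounded above by φ_e > 0, while all other edge weights are fixed. Then for every r ≥ 0 and every ε ≥ 0, if Δ_e(r) < ∞ then ℙ(r < Δ_e(r) ≤ r + ε) ≤ φ_e · ε. -/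
open Classical MeasureTheory ProbabilityTheory

/-- The combinatorial data of a weighted bicoloured-edge graph: a directed multigraph
with vertex set `V` and edge type `E` (no self-loops), each edge being either red
(`red e = true`) or green (`red e = false`).  The (strictly positive) edge weights,
which in this section may be random, are supplied separately as functions `w : E → ℝ`. -/
structure BiGraph (V : Type) where
  E : Type
  src : E → V
  dst : E → V
  red : E → Bool
  no_loop : ∀ e, src e ≠ dst e

namespace BiGraph

variable {V : Type} (G : BiGraph V)

/-- `p` is a path from `u` to `v`: a nonempty finite sequence of edges, each edge's
terminal vertex being the next edge's initial vertex, starting at `u` and ending at `v`. -/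
def IsPath (u v : V) (p : List G.E) : Prop :=
  p ≠ [] ∧ (∀ e ∈ p.head?, G.src e = u) ∧ (∀ e ∈ p.getLast?, G.dst e = v) ∧
    p.Chain' (fun a b => G.dst a = G.src b)

/-- `ω_red(p)`: the sum of the weights of the red edges of `p`, for weights `w`. -/
def redW (w : G.E → ℝ) (p : List G.E) : ℝ :=
  (p.map (fun e => if G.red e then w e else 0)).sum

/-- `ω_green(p)`: the sum of the weights of the green edges of `p`, for weights `w`. -/
def greenW (w : G.E → ℝ) (p : List G.E) : ℝ :=
  (p.map (fun e => if G.red e then 0 else w e)).sum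

/-- `p` is a minimal path from `u` to `v` (w.r.t. weights `w`): every path `q` from `u`
to `v` with `ω_red(q) ≤ ω_red(p)` and `ω_green(q) ≤ ω_green(p)` has the same red and
green weights as `p`. -/
def Minimal (w : G.E → ℝ) (u v : V) (p : List G.E) : Prop :=
  G.IsPath u v p ∧ ∀ q, G.IsPath u v q →
    G.redW w q ≤ G.redW w p → G.greenW w q ≤ G.greenW w p →
    G.redW w q = G.redW w p ∧ G.greenW w q = G.greenW w p

/-- `g_r`: the least green weight of a path from `u` to `v` that avoids the edge `e`
and has red weight at most `r`. -/
noncomputable def gVal (w : G.E → ℝ) (u v : V) (e : G.E) (r : ℝ) : ℝ :=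
  sInf (G.greenW w '' {p | G.IsPath u v p ∧ e ∉ p ∧ G.redW w p ≤ r})

/-- The set of paths from `u` to `v` through the edge `e` whose green weight is less
than `g_r`; the set over whose red weights `Δ_e(r)` is the infimum.  `Δ_e(r) = ∞`
corresponds to this set being empty. -/
def DeltaESet (w : G.E → ℝ) (u v : V) (e : G.E) (r : ℝ) : Set (List G.E) :=
  {q | G.IsPath u v q ∧ e ∈ q ∧ G.greenW w q < G.gVal w u v e r}

/-- `Δ_e(r)`: the least red weight of a path from `u` to `v` through `e` with green
weight less than `g_r`. -/
noncomputable def DeltaE (w : G.E → ℝ) (u v : V) (e : G.E) (r : ℝ) : ℝ :=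
  sInf (G.redW w '' G.DeltaESet w u v e r)

/-- `r_tot`: the least red weight of a pure red path from `u` to `v`. -/
noncomputable def rtot (w : G.E → ℝ) (u v : V) : ℝ :=
  sInf (G.redW w '' {p | G.IsPath u v p ∧ ∀ e ∈ p, G.red e = true})

/-- `Δ(r)`: the least red weight of a minimal path from `u` to `v` whose red weight
exceeds `r`. -/
noncomputable def Delta (w : G.E → ℝ) (u v : V) (r : ℝ) : ℝ :=
  sInf (G.redW w '' {q | G.Minimal w u v q ∧ r < G.redW w q})

end BiGraph

/-!
Since `e` is red, the weight `x` of `e` changes neither green weights nor `g_r`, so the set of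
candidate paths defining `Δ_e(r)` does not depend on `x`; the red weight of each candidate grows
in `x` with slope equal to the number of its passages through `e`, which is at least one. Hence
`x ↦ Δ_e(r)` grows with slope at least one wherever it exceeds `r ≥ 0`, so the values of `x`
with `Δ_e(r) ∈ (r, r + ε]` lie in an interval of length `ε`, of probability at most `φ ε`.
-/

open Function Set

namespace BiGraph

variable {V : Type} (G : BiGraph V)

theorem greenW_update_of_red {e : G.E} (he : G.red e = true) (w : G.E → ℝ) (x : ℝ)
    (p : List G.E) : G.greenW (update w e x) p = G.greenW w p := by
  unfold greenW
  congr 1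
  refine List.map_congr_left fun a _ => ?_
  by_cases h : a = e
  · subst h; simp [he]
  · simp [update_of_ne h]

theorem redW_update_of_not_mem {e : G.E} (w : G.E → ℝ) (x : ℝ) {p : List G.E} (hp : e ∉ p) :
    G.redW (update w e x) p = G.redW w p := by
  unfold redW
  congr 1
  refine List.map_congr_left fun a ha => ?_
  simp [update_of_ne (ne_of_mem_of_not_mem ha hp)]

theorem redW_update_eq_add {e : G.E} (he : G.red e = true) (w : G.E → ℝ) (x y : ℝ)
    (p : List G.E) :
    G.redW (update w e y) p = G.redW (update w e x) p + p.count e * (y - x) := by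
  induction p with
  | nil => simp [redW]
  | cons a p ih =>
    simp only [redW, List.map_cons, List.sum_cons] at ih ⊢
    rw [ih, List.count_cons]
    by_cases h : a = e
    · subst h
      simp only [he, ↓reduceIte, update_self, BEq.rfl, Nat.cast_add, Nat.cast_one]
      ring
    · simp only [ne_eq, h, not_false_eq_true, update_of_ne, beq_iff_eq, ↓reduceIte, add_zero]
      ring

theorem gVal_update_of_red {e : G.E} (he : G.red e = true) (w : G.E → ℝ) (x : ℝ) (u v : V)
    (r : ℝ) : G.gVal (update w e x) u v e r = G.gVal w u v e r := by
  unfold gVal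
  congr 1
  ext g
  simp only [mem_image, mem_ofPred_eq, G.greenW_update_of_red he]
  constructor <;> rintro ⟨p, ⟨hp, hep, hr⟩, rfl⟩
  · exact ⟨p, ⟨hp, hep, by rwa [G.redW_update_of_not_mem w x hep] at hr⟩, rfl⟩
  · exact ⟨p, ⟨hp, hep, by rwa [G.redW_update_of_not_mem w x hep]⟩, rfl⟩

theorem DeltaESet_update_of_red {e : G.E} (he : G.red e = true) (w : G.E → ℝ) (x : ℝ)
    (u v : V) (r : ℝ) : G.DeltaESet (update w e x) u v e r = G.DeltaESet w u v e r := by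
  ext q
  simp only [DeltaESet, mem_ofPred_eq, G.greenW_update_of_red he, G.gVal_update_of_red he]

/-- The hypothesis `Δ_e(r) ≠ 0` rules out the junk value `sInf = 0` of a set of reals that is
not bounded below. -/
theorem DeltaE_update_add_le {e : G.E} (he : G.red e = true) {w : G.E → ℝ} {u v : V} {r : ℝ}
    (hS : (G.DeltaESet w u v e r).Nonempty) {x y : ℝ} (hxy : x ≤ y)
    (hx : G.DeltaE (update w e x) u v e r ≠ 0) :
    G.DeltaE (update w e x) u v e r + (y - x) ≤ G.DeltaE (update w e y) u v e r := by
  simp only [DeltaE, G.DeltaESet_update_of_red he] at hx ⊢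
  have hbdd : BddBelow (G.redW (update w e x) '' G.DeltaESet w u v e r) := by
    by_contra h
    exact hx (Real.sInf_of_not_bddBelow h)
  refine le_csInf (hS.image _) ?_
  rintro _ ⟨q, hq, rfl⟩
  have hle := csInf_le hbdd (mem_image_of_mem _ hq)
  have hcount : (1 : ℝ) ≤ q.count e := by exact_mod_cast List.count_pos_iff.mpr hq.2.1
  rw [G.redW_update_eq_add he w x y]
  nlinarith

end BiGraph

theorem subset_Icc_csInf_add {B : Set ℝ} {ε : ℝ} (hB : ∀ x ∈ B, ∀ y ∈ B, x ≤ y → y - x ≤ ε) :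
    B ⊆ Icc (sInf B) (sInf B + ε) := by
  intro x hx
  have hbdd : BddBelow B := ⟨x - ε, fun y hy => by
    rcases le_total x y with hxy | hyx
    · linarith [hB x hx x hx le_rfl]
    · linarith [hB y hy x hx hyx]⟩
  refine ⟨csInf_le hbdd hx, ?_⟩
  have : x - ε ≤ sInf B := le_csInf ⟨x, hx⟩ fun y hy => by
    rcases le_total y x with hyx | hxy
    · linarith [hB y hy x hx hyx]
    · linarith [hB x hx x hx le_rfl]
  linarith

section Density

open MeasureTheory

variable {Ω : Type} [MeasurableSpace Ω] {μ : Measure Ω} {X : Ω → ℝ} {f : ℝ → ℝ}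

theorem integrable_of_measure_preimage_eq_integral [IsProbabilityMeasure μ]
    (hf : ∀ s : Set ℝ, MeasurableSet s → μ (X ⁻¹' s) = ENNReal.ofReal (∫ x in s, f x)) :
    Integrable f := by
  by_contra h
  have := hf univ MeasurableSet.univ
  simp [integral_undef h] at this

theorem measure_preimage_Icc_le_of_le [IsProbabilityMeasure μ] {φ : ℝ} (hf_le : ∀ x, f x ≤ φ)
    (hf : ∀ s : Set ℝ, MeasurableSet s → μ (X ⁻¹' s) = ENNReal.ofReal (∫ x in s, f x))
    (a : ℝ) {ε : ℝ} (hε : 0 ≤ ε) :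
    μ (X ⁻¹' Icc a (a + ε)) ≤ ENNReal.ofReal (φ * ε) := by
  rw [hf _ measurableSet_Icc]
  refine ENNReal.ofReal_le_ofReal ?_
  calc ∫ x in Icc a (a + ε), f x
      ≤ ∫ _ in Icc a (a + ε), φ :=
        setIntegral_mono (integrable_of_measure_preimage_eq_integral hf).integrableOn
          (integrableOn_const (by simp)) hf_le
    _ = φ * ε := by simp [hε, mul_comm]

end Density

theorem prob_DeltaE_mem_le_general {V : Type} (G : BiGraph V)
    (u v : V) (e : G.E) (he : G.red e = true)
    (w₀ : G.E → ℝ)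
    {Ω : Type} [MeasurableSpace Ω] (μ : MeasureTheory.Measure Ω) [IsProbabilityMeasure μ]
    (X : Ω → ℝ)
    (φ : ℝ) (f : ℝ → ℝ)
    (hf_le : ∀ x, f x ≤ φ)
    (hf_pdf : ∀ s : Set ℝ, MeasurableSet s → μ (X ⁻¹' s) = ENNReal.ofReal (∫ x in s, f x))
    (r ε : ℝ) (hr : 0 ≤ r) (hε : 0 ≤ ε)
    (hfin : (G.DeltaESet w₀ u v e r).Nonempty) :
    μ {ω : Ω | r < G.DeltaE (Function.update w₀ e (X ω)) u v e r ∧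
        G.DeltaE (Function.update w₀ e (X ω)) u v e r ≤ r + ε} ≤
      ENNReal.ofReal (φ * ε) := by
  set B : Set ℝ := {x | r < G.DeltaE (update w₀ e x) u v e r ∧
    G.DeltaE (update w₀ e x) u v e r ≤ r + ε}
  have hB : ∀ x ∈ B, ∀ y ∈ B, x ≤ y → y - x ≤ ε := fun x hx y hy hxy => by
    have := G.DeltaE_update_add_le he hfin hxy (hr.trans_lt hx.1).ne'
    linarith [hx.1, hy.2]
  calc μ (X ⁻¹' B) ≤ μ (X ⁻¹' Icc (sInf B) (sInf B + ε)) :=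
        measure_mono (preimage_mono (subset_Icc_csInf_add hB))
    _ ≤ ENNReal.ofReal (φ * ε) := measure_preimage_Icc_le_of_le hf_le hf_pdf _ hε

/-- **Lemma 3.** Let `G` be a finite weighted bicoloured-edge graph with
a pure green path from `u` to `v`, and let `e` be a red edge whose weight is a random
variable `X` with probability density `f` supported on `(0,∞)` and bounded by `φ`, all
other edge weights being fixed (given by `w₀`).  If `Δ_e(r) < ∞` then for `r ≥ 0` and
`ε ≥ 0`, `ℙ(r < Δ_e(r) ≤ r + ε) ≤ φ · ε`. -/
theorem prob_DeltaE_mem_le {V : Type} [Fintype V] (G : BiGraph V) [Fintype G.E]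
    (u v : V) (e : G.E) (he : G.red e = true)
    (w₀ : G.E → ℝ) (hw₀ : ∀ e' : G.E, e' ≠ e → 0 < w₀ e')
    (hgreen : ∃ p : List G.E, G.IsPath u v p ∧ ∀ e' ∈ p, G.red e' = false)
    {Ω : Type} [MeasurableSpace Ω] (μ : MeasureTheory.Measure Ω) [IsProbabilityMeasure μ]
    (X : Ω → ℝ) (hX : Measurable X)
    (φ : ℝ) (hφ : 0 < φ) (f : ℝ → ℝ)
    (hf_nonneg : ∀ x, 0 ≤ f x) (hf_le : ∀ x, f x ≤ φ) (hf_supp : ∀ x ≤ 0, f x = 0)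
    (hf_pdf : ∀ s : Set ℝ, MeasurableSet s → μ (X ⁻¹' s) = ENNReal.ofReal (∫ x in s, f x))
    (r ε : ℝ) (hr : 0 ≤ r) (hε : 0 ≤ ε)
    (hfin : (G.DeltaESet w₀ u v e r).Nonempty) :
    μ {ω : Ω | r < G.DeltaE (Function.update w₀ e (X ω)) u v e r ∧
        G.DeltaE (Function.update w₀ e (X ω)) u v e r ≤ r + ε} ≤
      ENNReal.ofReal (φ * ε) :=
  prob_DeltaE_mem_le_general G u v e he w₀ μ X φ f hf_le hf_pdf r ε hr hε hfin
end

section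
/- Let G be a finite weighted bicoloured-edge graph with colours {red, green}, and let u, v be vertices of G such that there exists a path from u to v using only green edges and a path from u to v using only red edges; let r_tot be the least red weight of a pure red path from u to v. Then for every r with 0 ≤ r < r_tot there exists a red edge e of G such that Δ(r) = Δ_e(r). -/
open Classical MeasureTheory ProbabilityTheory

/-! Let `p₀` be a path of least green weight among those of red weight `≤ r` (the pure green path
has red weight `0`), and `q₀` a minimal path of least red weight `> r` (a minimal path below the
pure red path is pure red, hence has red weight `≥ r_tot > r`). Minimality of `q₀` forces
`ω_green(q₀) < ω_green(p₀)`, and as `q₀` is redder than `p₀` and repeats no edge, some red edge `e`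
of `q₀` avoids `p₀`. For this `e` we get `g_r = ω_green(p₀)`, so `q₀` is admissible for `Δ_e(r)`;
conversely a path through `e` greener than `p₀` lies above a minimal path, which must have red
weight `> r`. Hence `Δ_e(r) = ω_red(q₀) = Δ(r)`. Finiteness enters because, the weights being
positive, minimal paths repeat no edge, so there are finitely many of them. -/

theorem List.exists_eq_append_cons_append_cons_of_not_nodup {α : Type*} {l : List α}
    (h : ¬ l.Nodup) : ∃ x y z a, l = x ++ a :: (y ++ a :: z) := by
  induction l with
  | nil => simp at h
  | cons b t ih =>
    rw [List.nodup_cons, not_and_or, not_not] at h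
    rcases h with hb | ht
    · obtain ⟨y, z, rfl⟩ := List.append_of_mem hb
      exact ⟨[], y, z, b, rfl⟩
    · obtain ⟨x, y, z, a, rfl⟩ := ih ht
      exact ⟨b :: x, y, z, a, rfl⟩

theorem List.finite_setOf_nodup (α : Type*) [Finite α] : {l : List α | l.Nodup}.Finite :=
  (List.finite_length_le α (Nat.card α)).subset fun _ hl => hl.length_le_natCard

namespace BiGraph

variable {V : Type} (G : BiGraph V) {w : G.E → ℝ} {u v : V}

theorem redW_add_greenW (p : List G.E) : G.redW w p + G.greenW w p = (p.map w).sum := by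
  induction p with
  | nil => simp [redW, greenW]
  | cons e p ih =>
    simp only [redW, greenW, List.map_cons, List.sum_cons] at ih ⊢
    split <;> linarith

theorem redW_eq_sum_filter (p : List G.E) :
    G.redW w p = ((p.filter (G.red ·)).map w).sum := by
  induction p with
  | nil => simp [redW]
  | cons e p ih =>
    simp only [redW, List.map_cons, List.sum_cons, List.filter_cons] at ih ⊢
    split <;> simp [*]

theorem redW_nonneg (hw : ∀ e, 0 ≤ w e) (p : List G.E) : 0 ≤ G.redW w p :=
  List.sum_nonneg <| by simp only [List.mem_map]; rintro _ ⟨e, -, rfl⟩; split <;> simp [hw e]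

theorem greenW_nonneg (hw : ∀ e, 0 ≤ w e) (p : List G.E) : 0 ≤ G.greenW w p :=
  List.sum_nonneg <| by simp only [List.mem_map]; rintro _ ⟨e, -, rfl⟩; split <;> simp [hw e]

theorem redW_eq_zero_iff (hw : ∀ e, 0 < w e) {p : List G.E} :
    G.redW w p = 0 ↔ ∀ e ∈ p, G.red e = false := by
  refine ⟨fun h e he => ?_, fun h => List.sum_eq_zero ?_⟩
  · have := List.all_zero_of_le_zero_le_of_sum_eq_zero
      (by simp only [List.mem_map]; rintro _ ⟨e, -, rfl⟩; split <;> simp [(hw e).le]) h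
      (List.mem_map_of_mem (f := fun e => if G.red e then w e else 0) he)
    simpa [(hw e).ne'] using this
  · simp +contextual [h]

theorem greenW_eq_zero_iff (hw : ∀ e, 0 < w e) {p : List G.E} :
    G.greenW w p = 0 ↔ ∀ e ∈ p, G.red e = true := by
  refine ⟨fun h e he => ?_, fun h => List.sum_eq_zero ?_⟩
  · have := List.all_zero_of_le_zero_le_of_sum_eq_zero
      (by simp only [List.mem_map]; rintro _ ⟨e, -, rfl⟩; split <;> simp [(hw e).le]) h
      (List.mem_map_of_mem (f := fun e => if G.red e then 0 else w e) he)
    simpa [(hw e).ne'] using this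
  · simp +contextual [h]

theorem exists_red_mem_not_mem_of_redW_lt (hw : ∀ e, 0 ≤ w e) {p q : List G.E} (hq : q.Nodup)
    (hpq : G.redW w p < G.redW w q) : ∃ e ∈ q, G.red e = true ∧ e ∉ p := by
  by_contra! h
  have hsub : (q.filter (G.red ·)).Subperm (p.filter (G.red ·)) :=
    (hq.filter _).subperm fun e he => by
      rw [List.mem_filter] at he ⊢
      exact ⟨h e he.1 he.2, he.2⟩
  obtain ⟨l, hl, hlp⟩ := hsub
  have : G.redW w q ≤ G.redW w p := by
    rw [redW_eq_sum_filter, redW_eq_sum_filter, ← (hl.map w).sum_eq]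
    exact (hlp.map w).sum_le_sum fun a ha => by
      obtain ⟨e, -, rfl⟩ := List.mem_map.1 ha
      exact hw e
  linarith

theorem isPath_splice {x y z : List G.E} {e : G.E}
    (h : G.IsPath u v (x ++ e :: (y ++ e :: z))) : G.IsPath u v (x ++ e :: z) := by
  obtain ⟨-, hhead, hlast, hchain⟩ := h
  refine ⟨by simp, fun a ha => hhead a (by simpa using ha), fun a ha => hlast a ?_, ?_⟩
  · rw [List.getLast?_append_of_ne_nil _ (List.cons_ne_nil _ _)] at ha
    rwa [← List.cons_append, ← List.append_assoc,
      List.getLast?_append_of_ne_nil _ (List.cons_ne_nil _ _)]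
  · rw [List.Chain', List.isChain_split, List.isChain_cons_split] at hchain
    rw [List.Chain', List.isChain_split]
    exact ⟨hchain.1, hchain.2.2⟩

theorem redW_splice {x y z : List G.E} {e : G.E} :
    G.redW w (x ++ e :: (y ++ e :: z)) = G.redW w (x ++ e :: z) + G.redW w (e :: y) := by
  simp only [redW, List.map_append, List.map_cons, List.sum_append, List.sum_cons]
  ring

theorem greenW_splice {x y z : List G.E} {e : G.E} :
    G.greenW w (x ++ e :: (y ++ e :: z)) = G.greenW w (x ++ e :: z) + G.greenW w (e :: y) := by
  simp only [greenW, List.map_append, List.map_cons, List.sum_append, List.sum_cons]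
  ring

theorem exists_nodup_le (hw : ∀ e, 0 ≤ w e) {p : List G.E} (hp : G.IsPath u v p) :
    ∃ q, G.IsPath u v q ∧ q.Nodup ∧ G.redW w q ≤ G.redW w p ∧ G.greenW w q ≤ G.greenW w p := by
  by_cases hnd : p.Nodup
  · exact ⟨p, hp, hnd, le_rfl, le_rfl⟩
  obtain ⟨x, y, z, a, hsplit⟩ := List.exists_eq_append_cons_append_cons_of_not_nodup hnd
  rw [hsplit] at hp ⊢
  obtain ⟨q, hq, hqnd, hqr, hqg⟩ := exists_nodup_le hw (G.isPath_splice hp)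
  refine ⟨q, hq, hqnd, ?_, ?_⟩
  · linarith [G.redW_splice (w := w) (x := x) (y := y) (z := z) (e := a), G.redW_nonneg hw (a :: y)]
  · linarith [G.greenW_splice (w := w) (x := x) (y := y) (z := z) (e := a),
      G.greenW_nonneg hw (a :: y)]
termination_by p.length
decreasing_by simp [hsplit]

variable {G} in
theorem Minimal.nodup (hw : ∀ e, 0 < w e) {p : List G.E} (hp : G.Minimal w u v p) : p.Nodup := by
  by_contra hnd
  obtain ⟨x, y, z, a, hsplit⟩ := List.exists_eq_append_cons_append_cons_of_not_nodup hnd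
  rw [hsplit] at hp
  have hpos : 0 < G.redW w (a :: y) + G.greenW w (a :: y) := by
    rw [redW_add_greenW, List.map_cons, List.sum_cons]
    exact add_pos_of_pos_of_nonneg (hw a) (List.sum_nonneg fun b hb => by
      obtain ⟨e, -, rfl⟩ := List.mem_map.1 hb
      exact (hw e).le)
  have hr := G.redW_splice (w := w) (x := x) (y := y) (z := z) (e := a)
  have hg := G.greenW_splice (w := w) (x := x) (y := y) (z := z) (e := a)
  have hw' : ∀ e, 0 ≤ w e := fun e => (hw e).le
  obtain ⟨hr', hg'⟩ := hp.2 _ (G.isPath_splice hp.1)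
    (by linarith [G.redW_nonneg hw' (a :: y)]) (by linarith [G.greenW_nonneg hw' (a :: y)])
  linarith

theorem finite_setOf_minimal [Finite G.E] (hw : ∀ e, 0 < w e) :
    {p | G.Minimal w u v p}.Finite :=
  (List.finite_setOf_nodup G.E).subset fun _ hp => hp.nodup hw

theorem exists_minimal_le [Finite G.E] (hw : ∀ e, 0 ≤ w e) {p : List G.E}
    (hp : G.IsPath u v p) :
    ∃ q, G.Minimal w u v q ∧ G.redW w q ≤ G.redW w p ∧ G.greenW w q ≤ G.greenW w p := by
  set S := {q | G.IsPath u v q ∧ q.Nodup ∧ G.redW w q ≤ G.redW w p ∧ G.greenW w q ≤ G.greenW w p}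
  have hS : S.Finite := (List.finite_setOf_nodup G.E).subset fun _ hq => hq.2.1
  obtain ⟨q₀, ⟨hq₀, -, hr, hg⟩, hleast⟩ :=
    S.exists_min_image (fun q => G.redW w q + G.greenW w q) hS (G.exists_nodup_le hw hp)
  refine ⟨q₀, ⟨hq₀, fun s hs hsr hsg => ?_⟩, hr, hg⟩
  obtain ⟨s', hs', hs'nd, hs'r, hs'g⟩ := G.exists_nodup_le hw hs
  have := hleast s' ⟨hs', hs'nd, by linarith, by linarith⟩
  constructor <;> linarith

theorem exists_minimal_forall_greenW_le [Finite G.E] (hw : ∀ e, 0 < w e) {r : ℝ}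
    (h : ∃ p, G.IsPath u v p ∧ G.redW w p ≤ r) :
    ∃ p₀, G.Minimal w u v p₀ ∧ G.redW w p₀ ≤ r ∧
      ∀ p, G.IsPath u v p → G.redW w p ≤ r → G.greenW w p₀ ≤ G.greenW w p := by
  have hw' : ∀ e, 0 ≤ w e := fun e => (hw e).le
  obtain ⟨p, hp, hpr⟩ := h
  obtain ⟨q, hq, hqr, -⟩ := G.exists_minimal_le hw' hp
  obtain ⟨p₀, ⟨hp₀, hp₀r⟩, hleast⟩ := Set.exists_min_image {q | G.Minimal w u v q ∧ G.redW w q ≤ r}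
    (G.greenW w) ((G.finite_setOf_minimal hw).subset fun _ hq => hq.1) ⟨q, hq, hqr.trans hpr⟩
  refine ⟨p₀, hp₀, hp₀r, fun p hp hpr => ?_⟩
  obtain ⟨q, hq, hqr, hqg⟩ := G.exists_minimal_le hw' hp
  exact (hleast q ⟨hq, hqr.trans hpr⟩).trans hqg

theorem exists_minimal_forall_redW_le [Finite G.E] (hw : ∀ e, 0 < w e) {r : ℝ}
    (h : ∃ q, G.Minimal w u v q ∧ r < G.redW w q) :
    ∃ q₀, G.Minimal w u v q₀ ∧ r < G.redW w q₀ ∧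
      ∀ q, G.Minimal w u v q → r < G.redW w q → G.redW w q₀ ≤ G.redW w q := by
  obtain ⟨q₀, ⟨hq₀, hq₀r⟩, hleast⟩ := Set.exists_min_image {q | G.Minimal w u v q ∧ r < G.redW w q}
    (G.redW w) ((G.finite_setOf_minimal hw).subset fun _ hq => hq.1) h
  exact ⟨q₀, hq₀, hq₀r, fun q hq hqr => hleast q ⟨hq, hqr⟩⟩

theorem rtot_le_redW (hw : ∀ e, 0 ≤ w e) {p : List G.E} (hp : G.IsPath u v p)
    (hred : ∀ e ∈ p, G.red e = true) : G.rtot w u v ≤ G.redW w p :=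
  csInf_le ⟨0, by rintro _ ⟨q, -, rfl⟩; exact G.redW_nonneg hw q⟩ ⟨p, ⟨hp, hred⟩, rfl⟩

theorem exists_minimal_lt_redW [Finite G.E] (hw : ∀ e, 0 < w e)
    (hred : ∃ p, G.IsPath u v p ∧ ∀ e ∈ p, G.red e = true) {r : ℝ} (hr : r < G.rtot w u v) :
    ∃ q, G.Minimal w u v q ∧ r < G.redW w q := by
  have hw' : ∀ e, 0 ≤ w e := fun e => (hw e).le
  obtain ⟨p, hp, hpred⟩ := hred
  obtain ⟨q, hq, -, hqg⟩ := G.exists_minimal_le hw' hp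
  rw [(G.greenW_eq_zero_iff hw).2 hpred] at hqg
  have hqred := (G.greenW_eq_zero_iff hw).1 (hqg.antisymm (G.greenW_nonneg hw' q))
  exact ⟨q, hq, hr.trans_le (G.rtot_le_redW hw' hq.1 hqred)⟩

end BiGraph

theorem Delta_eq_DeltaE_general {V : Type} (G : BiGraph V) [Fintype G.E]
    (w : G.E → ℝ) (hw : ∀ e : G.E, 0 < w e)
    (u v : V)
    (hgreen : ∃ p : List G.E, G.IsPath u v p ∧ ∀ e ∈ p, G.red e = false)
    (hred : ∃ p : List G.E, G.IsPath u v p ∧ ∀ e ∈ p, G.red e = true)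
    (r : ℝ) (hr : 0 ≤ r) (hrtot : r < G.rtot w u v) :
    ∃ e : G.E, G.red e = true ∧ (G.DeltaESet w u v e r).Nonempty ∧
      G.Delta w u v r = G.DeltaE w u v e r := by
  obtain ⟨pg, hpg, hpg_green⟩ := hgreen
  obtain ⟨p₀, hp₀, hp₀r, hp₀least⟩ := G.exists_minimal_forall_greenW_le hw
    ⟨pg, hpg, ((G.redW_eq_zero_iff hw).2 hpg_green).trans_le hr⟩
  obtain ⟨q₀, hq₀, hq₀r, hq₀least⟩ :=
    G.exists_minimal_forall_redW_le hw (G.exists_minimal_lt_redW hw hred hrtot)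
  have hq₀g : G.greenW w q₀ < G.greenW w p₀ := by
    by_contra! h
    exact hq₀r.not_ge ((hq₀.2 p₀ hp₀.1 (hp₀r.trans hq₀r.le) h).1 ▸ hp₀r)
  obtain ⟨e, heq₀, he, hep₀⟩ :=
    G.exists_red_mem_not_mem_of_redW_lt (fun e => (hw e).le) (hq₀.nodup hw) (hp₀r.trans_lt hq₀r)
  have hg : G.gVal w u v e r = G.greenW w p₀ := IsLeast.csInf_eq
    ⟨⟨p₀, ⟨hp₀.1, hep₀, hp₀r⟩, rfl⟩, by rintro _ ⟨p, ⟨hp, -, hpr⟩, rfl⟩; exact hp₀least p hp hpr⟩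
  have hq₀E : q₀ ∈ G.DeltaESet w u v e r := ⟨hq₀.1, heq₀, hg ▸ hq₀g⟩
  have hDelta : G.Delta w u v r = G.redW w q₀ := IsLeast.csInf_eq
    ⟨⟨q₀, ⟨hq₀, hq₀r⟩, rfl⟩, by rintro _ ⟨q, ⟨hq, hqr⟩, rfl⟩; exact hq₀least q hq hqr⟩
  have hDeltaE : G.DeltaE w u v e r = G.redW w q₀ := IsLeast.csInf_eq ⟨⟨q₀, hq₀E, rfl⟩, by
    rintro _ ⟨q, ⟨hq, -, hqg⟩, rfl⟩
    obtain ⟨q', hq', hq'r, hq'g⟩ := G.exists_minimal_le (fun e => (hw e).le) hq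
    have hq'r_gt : r < G.redW w q' := lt_of_not_ge fun h =>
      (hq'g.trans_lt (hg ▸ hqg)).not_ge (hp₀least q' hq'.1 h)
    exact (hq₀least q' hq' hq'r_gt).trans hq'r⟩
  exact ⟨e, he, ⟨q₀, hq₀E⟩, hDelta.trans hDeltaE.symm⟩

/-- **Lemma 4.** Let `G` be a finite weighted bicoloured-edge graph with
strictly positive weights `w`, and `u`, `v` vertices joined both by a pure green path
and by a pure red path.  Then for every `r` with `0 ≤ r < r_tot` there is a red edge
`e` with `Δ(r) = Δ_e(r)` (in particular `Δ_e(r) < ∞`, i.e. the defining set of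
`Δ_e(r)` is nonempty). -/
theorem Delta_eq_DeltaE {V : Type} [Fintype V] (G : BiGraph V) [Fintype G.E]
    (w : G.E → ℝ) (hw : ∀ e : G.E, 0 < w e)
    (u v : V)
    (hgreen : ∃ p : List G.E, G.IsPath u v p ∧ ∀ e ∈ p, G.red e = false)
    (hred : ∃ p : List G.E, G.IsPath u v p ∧ ∀ e ∈ p, G.red e = true)
    (r : ℝ) (hr : 0 ≤ r) (hrtot : r < G.rtot w u v) :
    ∃ e : G.E, G.red e = true ∧ (G.DeltaESet w u v e r).Nonempty ∧
      G.Delta w u v r = G.DeltaE w u v e r :=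
  Delta_eq_DeltaE_general G w hw u v hgreen hred r hr hrtot
end
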